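/- Let c¹ and c² be two weight vectors in ℝ^n with strictly positive entries each summing to 1. Every fixed point y ∈ Δ̃_n of the composition F_{c²} ∘ F_{c¹} lies in int(Δ_n), i.e. if y ∈ Δ̃_n satisfies F_{c²}(F_{c¹}(y)) = y then y_i > 0 for every i; hence no point on the boundary of Δ_n other than the vertices e_1, …, e_n is a fixed point of F_{c²} ∘ F_{c¹}. -/

import Mathlib

open scoped Classical BigOperators

/-- The standard simplex Δₙ in ℝⁿ. -/
def DFsimplex (n : ℕ) : Set (Fin n → ℝ) :=
  {x | (∀ i, 0 ≤ x i) ∧ ∑ i, x i = 1}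

/-- Δ̃ₙ : the simplex with its vertices removed, i.e. points of Δₙ with all coordinates < 1. -/
def DFsimplexTilde (n : ℕ) : Set (Fin n → ℝ) :=
  {x | x ∈ DFsimplex n ∧ ∀ i, x i < 1}

/-- int(Δₙ) : points of Δₙ with all coordinates > 0. -/
def DFsimplexInt (n : ℕ) : Set (Fin n → ℝ) :=
  {x | x ∈ DFsimplex n ∧ ∀ i, 0 < x i}

/-- αᶜ(x) = (∑ⱼ cⱼ/(1-xⱼ))⁻¹. -/
noncomputable def DFalpha {n : ℕ} (c x : Fin n → ℝ) : ℝ :=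
  (∑ j, c j / (1 - x j))⁻¹

/-- The DeGroot–Friedkin map Fᶜ : fixes the vertices eᵢ, and elsewhere
Fᶜ(x)ᵢ = αᶜ(x)·cᵢ/(1-xᵢ). -/
noncomputable def DFmap {n : ℕ} (c : Fin n → ℝ) (x : Fin n → ℝ) : Fin n → ℝ :=
  if ∃ i, x = Pi.single i 1 then x
  else fun i => DFalpha c x * (c i / (1 - x i))

/-! Off the vertices, every coordinate `α_c(x) c_i / (1 - x_i)` of `F_c(x)` is positive and,
since the other terms of the sum defining `α_c(x)⁻¹` are positive too, smaller than `1`.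
Hence `F_{c₁}(y)` lies in `Δ̃ₙ` again, and then `y = F_{c₂}(F_{c₁}(y))` has positive
coordinates. -/

section DFmap

variable {n : ℕ} {c x : Fin n → ℝ}

theorem nontrivial_of_mem_DFsimplexTilde (hx : x ∈ DFsimplexTilde n) : Nontrivial (Fin n) := by
  obtain ⟨⟨-, hsum⟩, hlt⟩ := hx
  by_contra htriv
  have : Subsingleton (Fin n) := not_nontrivial_iff_subsingleton.mp htriv
  obtain ⟨i, -, -⟩ := Finset.exists_ne_zero_of_sum_ne_zero (hsum.trans_ne one_ne_zero)
  exact (hlt i).ne (by rwa [Fintype.sum_subsingleton x i] at hsum)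

theorem DFmap_eq_of_mem_DFsimplexTilde (hx : x ∈ DFsimplexTilde n) :
    DFmap c x = fun i => DFalpha c x * (c i / (1 - x i)) := by
  refine if_neg ?_
  rintro ⟨i, rfl⟩
  simpa using hx.2 i

theorem div_one_sub_pos_of_mem_DFsimplexTilde (hc : ∀ i, 0 < c i) (hx : x ∈ DFsimplexTilde n)
    (i : Fin n) : 0 < c i / (1 - x i) :=
  div_pos (hc i) (sub_pos.mpr (hx.2 i))

theorem sum_div_one_sub_pos (hc : ∀ i, 0 < c i) (hx : x ∈ DFsimplexTilde n) :
    0 < ∑ j, c j / (1 - x j) := by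
  have := nontrivial_of_mem_DFsimplexTilde hx
  exact Finset.sum_pos (fun j _ => div_one_sub_pos_of_mem_DFsimplexTilde hc hx j)
    Finset.univ_nonempty

theorem DFmap_pos (hc : ∀ i, 0 < c i) (hx : x ∈ DFsimplexTilde n) (i : Fin n) :
    0 < DFmap c x i := by
  rw [DFmap_eq_of_mem_DFsimplexTilde hx]
  exact mul_pos (inv_pos.mpr (sum_div_one_sub_pos hc hx))
    (div_one_sub_pos_of_mem_DFsimplexTilde hc hx i)

theorem sum_DFmap (hc : ∀ i, 0 < c i) (hx : x ∈ DFsimplexTilde n) : ∑ i, DFmap c x i = 1 := by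
  rw [DFmap_eq_of_mem_DFsimplexTilde hx, ← Finset.mul_sum, DFalpha,
    inv_mul_cancel₀ (sum_div_one_sub_pos hc hx).ne']

theorem DFmap_lt_one (hc : ∀ i, 0 < c i) (hx : x ∈ DFsimplexTilde n) (i : Fin n) :
    DFmap c x i < 1 := by
  have := nontrivial_of_mem_DFsimplexTilde hx
  obtain ⟨j, hji⟩ := exists_ne i
  calc DFmap c x i < ∑ k, DFmap c x k :=
        Finset.single_lt_sum hji (Finset.mem_univ i) (Finset.mem_univ j) (DFmap_pos hc hx j)
          (fun k _ _ => (DFmap_pos hc hx k).le)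
    _ = 1 := sum_DFmap hc hx

theorem DFmap_mem_DFsimplexInt (hc : ∀ i, 0 < c i) (hx : x ∈ DFsimplexTilde n) :
    DFmap c x ∈ DFsimplexInt n :=
  ⟨⟨fun i => (DFmap_pos hc hx i).le, sum_DFmap hc hx⟩, DFmap_pos hc hx⟩

theorem DFmap_mem_DFsimplexTilde (hc : ∀ i, 0 < c i) (hx : x ∈ DFsimplexTilde n) :
    DFmap c x ∈ DFsimplexTilde n :=
  ⟨(DFmap_mem_DFsimplexInt hc hx).1, DFmap_lt_one hc hx⟩

end DFmap

theorem stmt_8_general (n : ℕ) (c₁ c₂ : Fin n → ℝ)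
    (hc₁ : ∀ i, 0 < c₁ i)
    (hc₂ : ∀ i, 0 < c₂ i) :
    ∀ y ∈ DFsimplexTilde n, DFmap c₂ (DFmap c₁ y) = y → y ∈ DFsimplexInt n := by
  intro y hy hfix
  rw [← hfix]
  exact DFmap_mem_DFsimplexInt hc₂ (DFmap_mem_DFsimplexTilde hc₁ hy)

/-- Every fixed point y ∈ Δ̃ₙ of F_{c²} ∘ F_{c¹} lies in int(Δₙ): no boundary point of Δₙ
other than the vertices is a fixed point of the composition. -/
theorem stmt_8 (n : ℕ) (hn : 3 ≤ n) (c₁ c₂ : Fin n → ℝ)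
    (hc₁ : ∀ i, 0 < c₁ i) (hc₁sum : ∑ i, c₁ i = 1)
    (hc₂ : ∀ i, 0 < c₂ i) (hc₂sum : ∑ i, c₂ i = 1) :
    ∀ y ∈ DFsimplexTilde n, DFmap c₂ (DFmap c₁ y) = y → y ∈ DFsimplexInt n :=
  stmt_8_general n c₁ c₂ hc₁ hc₂
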